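/- Let z be a submodular function on the finite set I and let z = z₁ ⋯ z_r be its unique factorization into indecomposable factors supported on the partition I = I₁ ⊔ ⋯ ⊔ I_r. Then the dimension of Π(z) equals |I| − r. In particular, if z is indecomposable then dim Π(z) = |I| − 1, and there exists x ∈ Π(z) with x_A < z(A) for every A with ∅ ≠ A ≠ I and z(A) < ∞. -/

import Mathlib

open scoped Classical

/-- A preorder on `X`, bundled as a reflexive and transitive relation. -/
structure Preo (X : Type*) where
  le : X → X → Prop
  le_refl : ∀ x, le x x
  le_trans : ∀ {x y z}, le x y → le y z → le x z

namespace Preo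

variable {X : Type*}

/-- The refinement partial order `P ⪯ Q` on preorders: `x ≤_P y` implies `x ≤_Q y`. -/
def Le (P Q : Preo X) : Prop := ∀ ⦃a b⦄, P.le a b → Q.le a b

/-- The opposite preorder. -/
def op (P : Preo X) : Preo X where
  le a b := P.le b a
  le_refl x := P.le_refl x
  le_trans h h' := P.le_trans h' h

/-- The meet (pointwise intersection) of two preorders. -/
def meet (P Q : Preo X) : Preo X where
  le a b := P.le a b ∧ Q.le a b
  le_refl x := ⟨P.le_refl x, Q.le_refl x⟩
  le_trans h h' := ⟨P.le_trans h.1 h'.1, Q.le_trans h.2 h'.2⟩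

/-- The join of two preorders: zigzag chains, i.e. the reflexive-transitive closure
of the union of the two relations. -/
def join (P Q : Preo X) : Preo X where
  le a b := Relation.ReflTransGen (fun u v => P.le u v ∨ Q.le u v) a b
  le_refl _ := Relation.ReflTransGen.refl
  le_trans h h' := Relation.ReflTransGen.trans h h'

/-- The bubble relation: `a` and `b` lie in the same bubble of `P`. -/
def bubRel (P : Preo X) (a b : X) : Prop := P.le a b ∧ P.le b a

/-- `R ◁ P` : `R` is a subdivision of `P`, i.e. `R ⪯ P` and `R = P ∧ (P^op ∨ R)`. -/
def Subdiv (R P : Preo X) : Prop := R.Le P ∧ R = P.meet (P.op.join R)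

/-- `P ◀ Q` : `Q` is a contraction of `P`, i.e. `P ⪯ Q` and `Q = P ∨ (P^op ∧ Q)`. -/
def Contr (P Q : Preo X) : Prop := P.Le Q ∧ Q = P.join (P.op.meet Q)

/-- `K` is a convex subset for the preorder `P`. -/
def ConvexIn (P : Preo X) (K : Set X) : Prop :=
  ∀ ⦃x y z⦄, x ∈ K → y ∈ K → P.le x z → P.le z y → z ∈ K

/-- `K` is connected for (the restriction to `K` of) the preorder `P`:
any two of its elements are joined by a zigzag chain of comparabilities within `K`. -/
def ConnectedIn (P : Preo X) (K : Set X) : Prop :=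
  ∀ ⦃x y⦄, x ∈ K → y ∈ K →
    Relation.ReflTransGen (fun u v => u ∈ K ∧ v ∈ K ∧ (P.le u v ∨ P.le v u)) x y

/-- A total preorder. -/
def Total (P : Preo X) : Prop := ∀ a b, P.le a b ∨ P.le b a

/-- `L` is a linear extension of `P`: `L` is total, `P ⪯ L`, and the bubbles coincide. -/
def IsLinExt (P L : Preo X) : Prop :=
  L.Total ∧ P.Le L ∧ ∀ a b, P.bubRel a b ↔ L.bubRel a b

/-- A finite down-set of the preorder `P`. -/
def IsDownset (P : Preo X) (A : Finset X) : Prop :=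
  ∀ ⦃x y⦄, y ∈ A → P.le x y → x ∈ A

/-- A convex finite subset of the preorder `P`. -/
def ConvexF (P : Preo X) (C : Finset X) : Prop :=
  ∀ ⦃x y z⦄, x ∈ C → y ∈ C → P.le x z → P.le z y → z ∈ C

/-- The down-set generated by a finite set `C`. -/
noncomputable def downClosure [Fintype X] (P : Preo X) (C : Finset X) : Finset X :=
  Finset.univ.filter (fun x => ∃ y ∈ C, P.le x y)

/-- The bubble of an element `a`. -/
noncomputable def bubble [Fintype X] (P : Preo X) (a : X) : Finset X :=
  Finset.univ.filter (fun x => P.le a x ∧ P.le x a)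

/-- The set of bubbles of `P`. -/
noncomputable def bubbles [Fintype X] (P : Preo X) : Finset (Finset X) :=
  Finset.univ.image (fun a => P.bubble a)

/-- `R` is a positive sub-preorder of `P`: in any loop
`x = x₀ ≤_R x₁ ≥_P x₂ ≤_R ⋯ ≤_R x_{2k-1} ≥_P x_{2k} = x`,
every descending step `≥_P` is actually `≥_R`. -/
def PositiveSub (R P : Preo X) : Prop :=
  ∀ (k : ℕ) (x : ℕ → X), x (2 * k) = x 0 →
    (∀ i < k, R.le (x (2 * i)) (x (2 * i + 1))) →
    (∀ i < k, P.le (x (2 * i + 2)) (x (2 * i + 1))) →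
    ∀ i < k, R.le (x (2 * i + 2)) (x (2 * i + 1))

end Preo

section Submod

variable {I : Type*} [Fintype I] [DecidableEq I]

/-- A function `z : P(I) → ℝ ∪ {∞}` is submodular if
`z(S ∪ T) + z(S ∩ T) ≤ z(S) + z(T)` for all `S, T`. -/
def Submodular (z : Finset I → WithTop ℝ) : Prop :=
  ∀ S T : Finset I, z (S ∪ T) + z (S ∩ T) ≤ z S + z T

/-- The corestriction `z_{/A}` : `U ↦ z(A ∪ U) − z(A)` (meaningful when `z A ≠ ⊤`). -/
noncomputable def coRes (z : Finset I → WithTop ℝ) (A U : Finset I) : WithTop ℝ :=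
  z (A ∪ U) + ((-(z A).untopD 0 : ℝ) : WithTop ℝ)

/-- The extended generalized permutahedron of `z`:
`x_I = z(I)` and `x_A ≤ z(A)` whenever `z(A) < ∞`. -/
def EGP (z : Finset I → WithTop ℝ) : Set (I → ℝ) :=
  {x | ((∑ i, x i : ℝ) : WithTop ℝ) = z Finset.univ ∧
       ∀ A : Finset I, ((∑ i ∈ A, x i : ℝ) : WithTop ℝ) ≤ z A}

/-- `z` restricted to subsets of `C` decomposes as the product of its restrictions to `S`
and `T`, where `C = S ⊔ T`. -/
def SplitsAlong (z : Finset I → WithTop ℝ) (C S T : Finset I) : Prop :=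
  Disjoint S T ∧ S ∪ T = C ∧ ∀ E ⊆ C, z E = z (E ∩ S) + z (E ∩ T)

/-- `z` restricted to subsets of `C` is indecomposable. -/
def IndecompOn (z : Finset I → WithTop ℝ) (C : Finset I) : Prop :=
  ∀ S T : Finset I, S.Nonempty → T.Nonempty → ¬ SplitsAlong z C S T

/-- `fam` is the partition underlying a factorization of `z` into indecomposable
extended Boolean functions. -/
def IsIndecompFactorization (z : Finset I → WithTop ℝ) (fam : Finset (Finset I)) : Prop :=
  (∀ B ∈ fam, B.Nonempty) ∧
  (∀ B ∈ fam, ∀ B' ∈ fam, B ≠ B' → Disjoint B B') ∧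
  fam.sup id = Finset.univ ∧
  (∀ E : Finset I, z E = ∑ B ∈ fam, z (E ∩ B)) ∧
  ∀ B ∈ fam, IndecompOn z B

/-- A family of finite subsets of `I` forming a topology on `I`. -/
def IsTopologyFam (F : Set (Finset I)) : Prop :=
  ∅ ∈ F ∧ Finset.univ ∈ F ∧ (∀ A ∈ F, ∀ B ∈ F, A ∪ B ∈ F) ∧ ∀ A ∈ F, ∀ B ∈ F, A ∩ B ∈ F

/-- The preorder `P` is compatible with the submodular function `z`. -/
def Compatible (z : Finset I → WithTop ℝ) (P : Preo I) : Prop :=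
  (∀ A : Finset I, P.IsDownset A → z A ≠ ⊤) ∧
  ∀ A B : Finset I, P.IsDownset A → P.IsDownset B → A ⊆ B →
    ∀ C₁ C₂ : Finset I, Disjoint C₁ C₂ → C₁ ∪ C₂ = B \ A →
      (∀ x ∈ C₁, ∀ y ∈ C₂, ¬ P.le x y ∧ ¬ P.le y x) →
      ∀ U ⊆ B \ A, coRes z A U = coRes z A (U ∩ C₁) + coRes z A (U ∩ C₂)

/-- For a convex subset `C` of `P`, the function `z_C : U ↦ z(A ∪ U) − z(A)`, where
`A = (↓C) \ C` with `↓C` the down-set generated by `C`. -/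
noncomputable def zConv (z : Finset I → WithTop ℝ) (P : Preo I) (C U : Finset I) :
    WithTop ℝ :=
  coRes z (P.downClosure C \ C) U

/-- The preorder `P` conforms to the submodular function `z`: it is compatible with `z`
and every product decomposition of `z_C`, for `C` convex in `P`, comes from a
disconnected decomposition of the preorder induced on `C`. -/
def Conforms (z : Finset I → WithTop ℝ) (P : Preo I) : Prop :=
  Compatible z P ∧
  ∀ C : Finset I, P.ConvexF C →
    ∀ C₁ C₂ : Finset I, Disjoint C₁ C₂ → C₁ ∪ C₂ = C →
      (∀ U ⊆ C, zConv z P C U = zConv z P C (U ∩ C₁) + zConv z P C (U ∩ C₂)) →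
      ∀ x ∈ C₁, ∀ y ∈ C₂, ¬ P.le x y ∧ ¬ P.le y x

/-- The preorder `pre(z)` associated to `z`: `x ≤ y` iff every `A` with `z(A) < ∞`
("open set") containing `y` contains `x`. -/
def preZ (z : Finset I → WithTop ℝ) : Preo I where
  le x y := ∀ A : Finset I, z A ≠ ⊤ → y ∈ A → x ∈ A
  le_refl _ := fun _ _ h => h
  le_trans h h' := fun A hA hy => h A hA (h' A hA hy)

/-- The preorder associated (by the Alexandroff correspondence) to a family of subsets. -/
def preOfFam (F : Set (Finset I)) : Preo I where
  le x y := ∀ A ∈ F, y ∈ A → x ∈ A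
  le_refl _ := fun _ _ h => h
  le_trans h h' := fun A hA hy => h A hA (h' A hA hy)

/-- `Alin(P, z)`: the affine space cut out by `x_A = z(A)` for `A` a down-set of `P`. -/
def Alin (z : Finset I → WithTop ℝ) (P : Preo I) : Set (I → ℝ) :=
  {x | ∀ A : Finset I, P.IsDownset A → ((∑ i ∈ A, x i : ℝ) : WithTop ℝ) = z A}

/-- `AlinBu(P, z)`: the affine space cut out by `x_C = z_C(C)` for `C` a bubble of `P`. -/
def AlinBu (z : Finset I → WithTop ℝ) (P : Preo I) : Set (I → ℝ) :=
  {x | ∀ a : I, ((∑ i ∈ P.bubble a, x i : ℝ) : WithTop ℝ) = zConv z P (P.bubble a) (P.bubble a)}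

/-- `Φ_z(P)`: the (possibly empty) face of `Π(z)` cut out by the equalities `x_A = z(A)`
for `A` a down-set of `P`. -/
def Phi (z : Finset I → WithTop ℝ) (P : Preo I) : Set (I → ℝ) :=
  {x | x ∈ EGP z ∧ ∀ A : Finset I, P.IsDownset A → ((∑ i ∈ A, x i : ℝ) : WithTop ℝ) = z A}

/-- `Ψ_z(G)`: the family of sets `A` with `z(A) < ∞` on which `x_A = z(A)` for all `x ∈ G`. -/
def PsiFam (z : Finset I → WithTop ℝ) (G : Set (I → ℝ)) : Set (Finset I) :=
  {A | z A ≠ ⊤ ∧ ∀ x ∈ G, ((∑ i ∈ A, x i : ℝ) : WithTop ℝ) = z A}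

/-- `Ψ_z(G)` as a preorder. -/
def PsiPre (z : Finset I → WithTop ℝ) (G : Set (I → ℝ)) : Preo I :=
  preOfFam (PsiFam z G)

/-- `z_P = ∏_{C ∈ b(P)} z_C`: the product over all bubbles of `P`. -/
noncomputable def zP (z : Finset I → WithTop ℝ) (P : Preo I) : Finset I → WithTop ℝ :=
  fun E => ∑ C ∈ P.bubbles, zConv z P C (E ∩ C)

/-- The restriction `z|_S` of `z` to subsets of `S`. -/
def restrictFn (z : Finset I → WithTop ℝ) (S : Finset I) :
    Finset {x : I // x ∈ S} → WithTop ℝ :=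
  fun U => z (U.map (Function.Embedding.subtype fun x => x ∈ S))

/-- The corestriction `z_{/S}` of `z`, on subsets of `I ∖ S`. -/
noncomputable def coresFn (z : Finset I → WithTop ℝ) (S : Finset I) :
    Finset {x : I // x ∉ S} → WithTop ℝ :=
  fun U => z (S ∪ U.map (Function.Embedding.subtype fun x => x ∉ S)) +
    ((-(z S).untopD 0 : ℝ) : WithTop ℝ)

/-- The restriction `P|_S` of a preorder to `S`. -/
def restrictPre (P : Preo I) (S : Finset I) : Preo {x : I // x ∈ S} where
  le a b := P.le a b
  le_refl a := P.le_refl a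
  le_trans h h' := P.le_trans h h'

/-- The corestriction `P_{/S}` of a preorder, on `I ∖ S`. -/
def coresPre (P : Preo I) (S : Finset I) : Preo {x : I // x ∉ S} where
  le a b := P.le a b
  le_refl a := P.le_refl a
  le_trans h h' := P.le_trans h h'

end Submod

/-! Every block of the factorization is tight on all of `Π(z)`, so `Π(z)` lies in an affine
space of dimension `|I| - r`. Conversely, a set `A` with `z(A) < ∞` that is tight on all of
`Π(z)` is a union of blocks: otherwise, for a block `B` meeting `A` properly, `S = A ∩ B` and
`T = B \ S` are tight too, `z(T) < ∞` since moving mass downwards in `pre(z)` would change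
`x_T`, and submodularity then splits `z` along `B = S ⊔ T`, against indecomposability.
Averaging gives a point of `Π(z)` strict on all other sets; around it `Π(z)` fills a
neighbourhood in that affine space. -/

open Finset Filter Topology

section Submodular

variable {I : Type*} {z : Finset I → WithTop ℝ}

theorem mem_EGP_iff [Fintype I] (hzI : z univ ≠ ⊤) {x : I → ℝ} :
    x ∈ EGP z ↔ ∑ i, x i = (z univ).untop₀ ∧
      ∀ A, z A ≠ ⊤ → ∑ i ∈ A, x i ≤ (z A).untop₀ := by
  refine and_congr ?_ (forall_congr' fun A => ?_)
  · generalize z univ = c at hzI ⊢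
    lift c to ℝ using hzI
    simp only [WithTop.untop₀_coe, WithTop.coe_inj]
  · generalize z A = c
    cases c
    · simp
    · simp only [WithTop.untop₀_coe, WithTop.coe_le_coe, ne_eq, WithTop.coe_ne_top,
        not_false_eq_true, forall_const]

theorem eventually_add_smul_mem_EGP [Fintype I] (hzI : z univ ≠ ⊤) {x v : I → ℝ}
    (hx : x ∈ EGP z) (hv : ∀ A, z A ≠ ⊤ → ∑ i ∈ A, x i = (z A).untop₀ → ∑ i ∈ A, v i = 0) :
    ∀ᶠ t in 𝓝 (0 : ℝ), x + t • v ∈ EGP z := by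
  have hsum : ∀ (t : ℝ) A, ∑ i ∈ A, (x + t • v) i = ∑ i ∈ A, x i + t * ∑ i ∈ A, v i := by
    intro t A
    simp only [Pi.add_apply, Pi.smul_apply, smul_eq_mul, sum_add_distrib, mul_sum]
  rw [mem_EGP_iff hzI] at hx
  simp only [mem_EGP_iff hzI, hsum, hv univ hzI hx.1, mul_zero, add_zero, hx.1, true_and]
  refine eventually_all.2 fun A => ?_
  by_cases hA : z A = ⊤
  · exact Eventually.of_forall fun _ h => absurd hA h
  rcases (hx.2 A hA).eq_or_lt with hxA | hxA
  · exact Eventually.of_forall fun _ _ => by simp [hv A hA hxA, hxA]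
  · have hlim := (by fun_prop : Continuous fun t : ℝ => ∑ i ∈ A, x i + t * ∑ i ∈ A, v i).tendsto'
      0 (∑ i ∈ A, x i) (by simp)
    filter_upwards [hlim.eventually_lt_const hxA] with t ht _ using ht.le

variable [DecidableEq I]

theorem sum_eq_sum_inter_of_eq_zero {x : I → ℝ} {T : Finset I} (h : ∀ i ∉ T, x i = 0)
    (S : Finset I) : ∑ i ∈ S, x i = ∑ i ∈ S ∩ T, x i :=
  (sum_subset inter_subset_left fun i hi hiT => h i fun hT => hiT (mem_inter.2 ⟨hi, hT⟩)).symm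

theorem Submodular.union_ne_top (hsub : Submodular z) {S T : Finset I} (hS : z S ≠ ⊤)
    (hT : z T ≠ ⊤) : z (S ∪ T) ≠ ⊤ := by
  intro h
  simpa [h, hS, hT] using hsub S T

theorem Submodular.inter_ne_top (hsub : Submodular z) {S T : Finset I} (hS : z S ≠ ⊤)
    (hT : z T ≠ ⊤) : z (S ∩ T) ≠ ⊤ := by
  intro h
  simpa [h, hS, hT] using hsub S T

theorem Submodular.untop₀_union_add_untop₀_inter_le (hsub : Submodular z) {S T : Finset I}
    (hS : z S ≠ ⊤) (hT : z T ≠ ⊤) :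
    (z (S ∪ T)).untop₀ + (z (S ∩ T)).untop₀ ≤ (z S).untop₀ + (z T).untop₀ := by
  have h := hsub S T
  rw [← WithTop.coe_untop₀_of_ne_top hS, ← WithTop.coe_untop₀_of_ne_top hT,
    ← WithTop.coe_untop₀_of_ne_top (hsub.union_ne_top hS hT),
    ← WithTop.coe_untop₀_of_ne_top (hsub.inter_ne_top hS hT)] at h
  exact_mod_cast h

theorem Submodular.sup_ne_top (hz0 : z ∅ = 0) (hsub : Submodular z) {ι : Type*}
    {s : Finset ι} {f : ι → Finset I} (h : ∀ i ∈ s, z (f i) ≠ ⊤) : z (s.sup f) ≠ ⊤ :=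
  sup_induction (p := fun S => z S ≠ ⊤) (by simp [hz0])
    (fun _ h₁ _ h₂ => hsub.union_ne_top h₁ h₂) h

theorem Submodular.splitsAlong (hz0 : z ∅ = 0) (hsub : Submodular z) {C S T : Finset I}
    (hST : Disjoint S T) (hC : S ∪ T = C) (hS : z S ≠ ⊤) (hT : z T ≠ ⊤)
    (hval : (z C).untop₀ = (z S).untop₀ + (z T).untop₀) : SplitsAlong z C S T := by
  refine ⟨hST, hC, fun E hE => ?_⟩
  subst hC
  have hE_union : E ∩ S ∪ E ∩ T = E := by
    rw [← inter_union_distrib_left, inter_eq_left.2 hE]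
  have hE_inter : E ∩ S ∩ (E ∩ T) = ∅ := by
    rw [← disjoint_iff_inter_eq_empty]
    exact hST.mono inter_subset_right inter_subset_right
  have hle := hsub (E ∩ S) (E ∩ T)
  rw [hE_union, hE_inter, hz0, add_zero] at hle
  by_cases hEtop : z E = ⊤
  · rw [hEtop] at hle ⊢
    exact (top_le_iff.1 hle).symm
  have hES := hsub.inter_ne_top hEtop hS
  have hET := hsub.inter_ne_top hEtop hT
  -- the reverse inequality comes from submodularity at (S, E ∪ T) and at (E, T)
  have h₁ := hsub.untop₀_union_add_untop₀_inter_le hS (hsub.union_ne_top hEtop hT)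
  have h₂ := hsub.untop₀_union_add_untop₀_inter_le hEtop hT
  have hS_union : S ∪ (E ∪ T) = S ∪ T := by
    rw [← union_assoc, union_comm S E, union_assoc, union_eq_right.2 hE]
  have hS_inter : S ∩ (E ∪ T) = E ∩ S := by
    rw [inter_union_distrib_left, disjoint_iff_inter_eq_empty.1 hST, union_empty, inter_comm]
  rw [hS_union, hS_inter] at h₁
  rw [← WithTop.coe_untop₀_of_ne_top hES, ← WithTop.coe_untop₀_of_ne_top hET,
    ← WithTop.coe_untop₀_of_ne_top hEtop] at hle ⊢
  rw [← WithTop.coe_add, WithTop.coe_le_coe] at hle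
  rw [← WithTop.coe_add, WithTop.coe_inj]
  linarith

variable [Fintype I]

theorem Submodular.inf_ne_top (hzI : z univ ≠ ⊤) (hsub : Submodular z) {ι : Type*}
    {s : Finset ι} {f : ι → Finset I} (h : ∀ i ∈ s, z (f i) ≠ ⊤) : z (s.inf f) ≠ ⊤ :=
  inf_induction (p := fun S => z S ≠ ⊤) (by simpa using hzI)
    (fun _ h₁ _ h₂ => hsub.inter_ne_top h₁ h₂) h

theorem Submodular.ne_top_of_isDownset_preZ (hz0 : z ∅ = 0) (hzI : z univ ≠ ⊤)
    (hsub : Submodular z) {U : Finset I} (hU : (preZ z).IsDownset U) : z U ≠ ⊤ := by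
  let principal : I → Finset I := fun b => (univ.filter fun S => z S ≠ ⊤ ∧ b ∈ S).inf id
  have mem_principal : ∀ a b, a ∈ principal b ↔ (preZ z).le a b := by
    simp [principal, preZ, mem_inf]
  have hU_sup : U = U.sup principal := by
    ext a
    rw [Finset.mem_sup]
    constructor
    · exact fun ha => ⟨a, ha, (mem_principal a a).2 ((preZ z).le_refl a)⟩
    · rintro ⟨b, hb, hab⟩
      exact hU hb ((mem_principal a b).1 hab)
  rw [hU_sup]
  exact hsub.sup_ne_top hz0 fun b _ => hsub.inf_ne_top hzI fun S hS => (mem_filter.1 hS).2.1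

theorem Submodular.exists_greedy (hsub : Submodular z) {C : Finset I} (hC : z C ≠ ⊤)
    (D : Finset I) (hCD : C ⊆ D) :
    ∃ x : I → ℝ, (∀ i ∉ D \ C, x i = 0) ∧ ∑ i ∈ D, x i = (z D).untop₀ - (z C).untop₀ ∧
      ∀ S, z S ≠ ⊤ → C ⊆ S → S ⊆ D → ∑ i ∈ S, x i ≤ (z S).untop₀ - (z C).untop₀ := by
  induction D using Finset.strongInduction with
  | H D ih =>
  by_cases hDC : D = C
  · subst hDC
    refine ⟨0, fun _ _ => rfl, by simp, fun S _ hCS hSD => ?_⟩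
    rw [subset_antisymm hSD hCS]
    simp
  obtain ⟨M, hM, hM_max⟩ := exists_max_image
    (univ.filter fun M => z M ≠ ⊤ ∧ C ⊆ M ∧ M ⊂ D) card
    ⟨C, by simpa [hC] using ssubset_of_subset_of_ne hCD (Ne.symm hDC)⟩
  simp only [mem_filter, mem_univ, true_and, and_imp] at hM hM_max
  obtain ⟨hMtop, hCM, hMD⟩ := hM
  obtain ⟨d, hdD, hdM⟩ := exists_of_ssubset hMD
  obtain ⟨y, hy_zero, hy_sum, hy_le⟩ := ih M hMD hCM
  have hy_inter : ∀ S, ∑ i ∈ S, y i = ∑ i ∈ S ∩ M, y i :=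
    sum_eq_sum_inter_of_eq_zero fun i hi => hy_zero i fun h => hi (mem_sdiff.1 h).1
  have hcover : ∀ S, z S ≠ ⊤ → C ⊆ S → S ⊆ D → S ⊆ M ∨ S ∪ M = D := by
    intro S hS hCS hSD
    by_contra! h
    have hcard := hM_max (S ∪ M) (hsub.union_ne_top hS hMtop) (hCS.trans subset_union_left)
      (ssubset_of_subset_of_ne (union_subset hSD hMD.subset) h.2)
    exact h.1 ((eq_of_subset_of_card_le subset_union_right hcard) ▸ subset_union_left)
  let x := y + Pi.single d ((z D).untop₀ - (z M).untop₀)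
  have hx_sum : ∀ S, ∑ i ∈ S, x i =
      ∑ i ∈ S, y i + if d ∈ S then (z D).untop₀ - (z M).untop₀ else 0 := by
    intro S
    simp only [x, Pi.add_apply, sum_add_distrib, sum_pi_single']
  refine ⟨x, fun i hi => ?_, ?_, fun S hS hCS hSD => ?_⟩
  · have hid : i ≠ d := by
      rintro rfl
      exact hi (mem_sdiff.2 ⟨hdD, fun h => hdM (hCM h)⟩)
    have hiMC : i ∉ M \ C := fun h => hi (sdiff_subset_sdiff hMD.subset subset_rfl h)
    simp [x, hy_zero i hiMC, hid]
  · rw [hx_sum, if_pos hdD, hy_inter, inter_eq_right.2 hMD.subset, hy_sum]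
    ring
  rcases hcover S hS hCS hSD with hSM | hSM
  · rw [hx_sum, if_neg fun h => hdM (hSM h), add_zero]
    exact hy_le S hS hCS hSM
  · have hdS : d ∈ S := by
      have := hSM ▸ hdD
      simpa [hdM] using this
    have h₁ := hy_le (S ∩ M) (hsub.inter_ne_top hS hMtop) (subset_inter hCS hCM)
      inter_subset_right
    have h₂ := hsub.untop₀_union_add_untop₀_inter_le hS hMtop
    rw [hSM] at h₂
    rw [hx_sum, if_pos hdS, hy_inter]
    linarith

theorem Submodular.exists_mem_EGP_sum_eq (hz0 : z ∅ = 0) (hzI : z univ ≠ ⊤)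
    (hsub : Submodular z) {U : Finset I} (hU : z U ≠ ⊤) :
    ∃ x ∈ EGP z, ∑ i ∈ U, x i = (z U).untop₀ := by
  obtain ⟨x₁, hx₁_zero, hx₁_sum, hx₁_le⟩ :=
    hsub.exists_greedy (by simp [hz0]) U (empty_subset U)
  obtain ⟨x₂, hx₂_zero, hx₂_sum, hx₂_le⟩ := hsub.exists_greedy hU univ (subset_univ U)
  simp only [sdiff_empty, hz0, WithTop.untop₀_zero, sub_zero] at hx₁_zero hx₁_sum hx₁_le
  have hx₁_inter := sum_eq_sum_inter_of_eq_zero hx₁_zero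
  have hx₂_union : ∀ S, ∑ i ∈ S, x₂ i = ∑ i ∈ S ∪ U, x₂ i := fun S =>
    sum_subset subset_union_left fun i hi hiS => hx₂_zero i fun h =>
      (mem_sdiff.1 h).2 ((mem_union.1 hi).resolve_left hiS)
  have hx₂_U : ∑ i ∈ U, x₂ i = 0 :=
    sum_eq_zero fun i hi => hx₂_zero i fun h => (mem_sdiff.1 h).2 hi
  refine ⟨x₁ + x₂, (mem_EGP_iff hzI).2 ⟨?_, fun S hS => ?_⟩, ?_⟩
  · simp only [Pi.add_apply, sum_add_distrib]
    rw [hx₁_inter, univ_inter, hx₁_sum, hx₂_union, union_eq_left.2 (subset_univ U), hx₂_sum]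
    ring
  · have h₁ := hx₁_le (S ∩ U) (hsub.inter_ne_top hS hU) (empty_subset _)
      inter_subset_right
    have h₂ := hx₂_le (S ∪ U) (hsub.union_ne_top hS hU) subset_union_right (subset_univ _)
    have h₃ := hsub.untop₀_union_add_untop₀_inter_le hS hU
    simp only [Pi.add_apply, sum_add_distrib]
    rw [hx₁_inter, hx₂_union]
    linarith
  · simp only [Pi.add_apply, sum_add_distrib]
    rw [hx₂_U, hx₁_inter, inter_self, hx₁_sum, add_zero]

theorem Submodular.nonempty_EGP (hz0 : z ∅ = 0) (hzI : z univ ≠ ⊤) (hsub : Submodular z) :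
    (EGP z).Nonempty :=
  let ⟨x, hx, _⟩ := hsub.exists_mem_EGP_sum_eq hz0 hzI hzI
  ⟨x, hx⟩

theorem isDownset_preZ_of_sum_eq (hzI : z univ ≠ ⊤) (hne : (EGP z).Nonempty) {U : Finset I}
    (hU : ∀ x ∈ EGP z, ∀ y ∈ EGP z, ∑ i ∈ U, x i = ∑ i ∈ U, y i) :
    (preZ z).IsDownset U := by
  intro a b hb hab
  by_contra ha
  obtain ⟨x, hx⟩ := hne
  -- moving a unit of mass from `a` to `b` keeps `x` in `EGP z` but changes `x_U`
  let w : I → ℝ := Pi.single b 1 - Pi.single a 1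
  have hw : ∀ S, ∑ i ∈ S, w i = (if b ∈ S then 1 else 0) - if a ∈ S then 1 else 0 := by
    intro S
    simp only [w, Pi.sub_apply, sum_sub_distrib, sum_pi_single']
  have hxw : x + w ∈ EGP z := by
    rw [mem_EGP_iff hzI] at hx ⊢
    refine ⟨by simp [sum_add_distrib, hw, hx.1], fun S hS => ?_⟩
    have hxS := hx.2 S hS
    simp only [Pi.add_apply, sum_add_distrib, hw]
    by_cases hbS : b ∈ S
    · simp [hbS, hab S hS hbS, hxS]
    · split_ifs <;> linarith
  have := hU _ hxw x hx
  simp [sum_add_distrib, hw, hb, ha] at this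

theorem sum_inter_eq_untop₀_of_sum_eq (hzI : z univ ≠ ⊤) (hsub : Submodular z) {x : I → ℝ}
    (hx : x ∈ EGP z) {A B : Finset I} (hA : z A ≠ ⊤) (hB : z B ≠ ⊤)
    (hxA : ∑ i ∈ A, x i = (z A).untop₀) (hxB : ∑ i ∈ B, x i = (z B).untop₀) :
    ∑ i ∈ A ∩ B, x i = (z (A ∩ B)).untop₀ := by
  rw [mem_EGP_iff hzI] at hx
  have h₁ := hx.2 _ (hsub.union_ne_top hA hB)
  have h₂ := hx.2 _ (hsub.inter_ne_top hA hB)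
  have h₃ := sum_union_inter (s₁ := A) (s₂ := B) (f := x)
  have h₄ := hsub.untop₀_union_add_untop₀_inter_le hA hB
  linarith

theorem exists_mem_EGP_forall_lt (hzI : z univ ≠ ⊤) (hne : (EGP z).Nonempty)
    (s : Finset (Finset I))
    (hs : ∀ A ∈ s, z A ≠ ⊤ ∧ ∃ x ∈ EGP z, ∑ i ∈ A, x i < (z A).untop₀) :
    ∃ x ∈ EGP z, ∀ A ∈ s, ∑ i ∈ A, x i < (z A).untop₀ := by
  induction s using Finset.induction_on with
  | empty => simpa [Set.Nonempty] using hne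
  | insert A s _ ih =>
    obtain ⟨x, hx, hxs⟩ := ih fun B hB => hs B (mem_insert_of_mem hB)
    obtain ⟨hA, y, hy, hyA⟩ := hs A (mem_insert_self A s)
    have hmid : ∀ B, ∑ i ∈ B, (x i + y i) / 2 = (∑ i ∈ B, x i + ∑ i ∈ B, y i) / 2 := by
      intro B
      rw [← sum_div, sum_add_distrib]
    rw [mem_EGP_iff hzI] at hx hy
    refine ⟨fun i => (x i + y i) / 2, (mem_EGP_iff hzI).2 ⟨?_, fun B hB => ?_⟩, ?_⟩
    · rw [hmid, hx.1, hy.1]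
      ring
    · rw [hmid]
      linarith [hx.2 B hB, hy.2 B hB]
    · rw [forall_mem_insert, hmid]
      refine ⟨by linarith [hx.2 A hA], fun B hB => ?_⟩
      rw [hmid]
      linarith [hxs B hB, hy.2 B (hs B (mem_insert_of_mem hB)).1]

end Submodular

section BlockSum

variable {I : Type*}

def blockSum (fam : Finset (Finset I)) : (I → ℝ) →ₗ[ℝ] (fam → ℝ) :=
  LinearMap.pi fun B => ∑ i ∈ B.1, LinearMap.proj i

@[simp]
theorem blockSum_apply (fam : Finset (Finset I)) (v : I → ℝ) (B : fam) :
    blockSum fam v B = ∑ i ∈ B.1, v i := by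
  simp [blockSum]

variable [DecidableEq I]

theorem blockSum_surjective {fam : Finset (Finset I)} (hne : ∀ B ∈ fam, B.Nonempty)
    (hdisj : ∀ B ∈ fam, ∀ B' ∈ fam, B ≠ B' → Disjoint B B') :
    Function.Surjective (blockSum fam) := by
  choose p hp using fun B : fam => hne B.1 B.2
  refine fun g => ⟨∑ B, Pi.single (p B) (g B), funext fun B' => ?_⟩
  simp only [blockSum_apply, Finset.sum_apply]
  rw [sum_comm, sum_eq_single B']
  · simp [sum_pi_single', hp B']
  · intro B _ hBB'
    rw [sum_pi_single', if_neg]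
    exact disjoint_left.1 (hdisj B B.2 B' B'.2 fun h => hBB' (Subtype.ext h)) (hp B)
  · simp

theorem finrank_ker_blockSum [Fintype I] {fam : Finset (Finset I)} (hne : ∀ B ∈ fam, B.Nonempty)
    (hdisj : ∀ B ∈ fam, ∀ B' ∈ fam, B ≠ B' → Disjoint B B') :
    Module.finrank ℝ (LinearMap.ker (blockSum fam)) = Fintype.card I - fam.card := by
  have h := LinearMap.finrank_range_add_finrank_ker (blockSum fam)
  rw [LinearMap.range_eq_top.2 (blockSum_surjective hne hdisj), finrank_top,
    Module.finrank_fintype_fun_eq_card, Module.finrank_fintype_fun_eq_card,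
    Fintype.card_coe] at h
  omega

end BlockSum

section Factorization

variable {I : Type*} [DecidableEq I] {z : Finset I → WithTop ℝ} {fam : Finset (Finset I)}

def Saturated (fam : Finset (Finset I)) (A : Finset I) : Prop :=
  ∀ B ∈ fam, A ∩ B = ∅ ∨ A ∩ B = B

variable [Fintype I]

theorem IsIndecompFactorization.exists_mem (hfam : IsIndecompFactorization z fam) (i : I) :
    ∃ B ∈ fam, i ∈ B := by
  simpa using Finset.mem_sup.1 (hfam.2.2.1 ▸ mem_univ i)

theorem IsIndecompFactorization.sum_eq_sum_sum_inter (hfam : IsIndecompFactorization z fam)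
    (x : I → ℝ) (A : Finset I) : ∑ i ∈ A, x i = ∑ B ∈ fam, ∑ i ∈ A ∩ B, x i := by
  have hA : A = fam.biUnion (A ∩ ·) := by
    ext i
    obtain ⟨B, hB, hiB⟩ := hfam.exists_mem i
    simp only [mem_biUnion, mem_inter]
    exact ⟨fun hi => ⟨B, hB, hi, hiB⟩, fun ⟨_, _, hi, _⟩ => hi⟩
  conv_lhs => rw [hA]
  refine sum_biUnion fun B hB B' hB' hne => ?_
  exact (hfam.2.1 B hB B' hB' hne).mono inter_subset_right inter_subset_right

theorem IsIndecompFactorization.ne_top (hfam : IsIndecompFactorization z fam)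
    (hzI : z univ ≠ ⊤) {B : Finset I} (hB : B ∈ fam) : z B ≠ ⊤ := by
  rw [hfam.2.2.2.1 univ, ne_eq, WithTop.sum_eq_top] at hzI
  exact fun h => hzI ⟨B, hB, by rwa [univ_inter]⟩

theorem IsIndecompFactorization.sum_eq_untop₀ (hfam : IsIndecompFactorization z fam)
    (hzI : z univ ≠ ⊤) {x : I → ℝ} (hx : x ∈ EGP z) {B : Finset I} (hB : B ∈ fam) :
    ∑ i ∈ B, x i = (z B).untop₀ := by
  rw [mem_EGP_iff hzI] at hx
  have huniv : (z univ).untop₀ = ∑ B ∈ fam, (z B).untop₀ := by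
    rw [hfam.2.2.2.1 univ]
    simp only [univ_inter]
    rw [sum_congr rfl fun B hB => (WithTop.coe_untop₀_of_ne_top (hfam.ne_top hzI hB)).symm,
      ← WithTop.coe_sum, WithTop.untop₀_coe]
  have htotal : ∑ B ∈ fam, ∑ i ∈ B, x i = ∑ B ∈ fam, (z B).untop₀ := by
    rw [← huniv, ← hx.1, hfam.sum_eq_sum_sum_inter x univ]
    simp only [univ_inter]
  exact (sum_eq_sum_iff_of_le fun B hB => hx.2 B (hfam.ne_top hzI hB)).1 htotal B hB

theorem IsIndecompFactorization.saturated_of_forall_sum_eq (hfam : IsIndecompFactorization z fam)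
    (hz0 : z ∅ = 0) (hzI : z univ ≠ ⊤) (hsub : Submodular z) {A : Finset I} (hA : z A ≠ ⊤)
    (htight : ∀ x ∈ EGP z, ∑ i ∈ A, x i = (z A).untop₀) : Saturated fam A := by
  intro B hB
  by_contra! hAB
  have hBtop := hfam.ne_top hzI hB
  set S := A ∩ B
  set T := B \ S
  have hSB : S ⊆ B := inter_subset_right
  have hStop : z S ≠ ⊤ := hsub.inter_ne_top hA hBtop
  have hS_tight : ∀ x ∈ EGP z, ∑ i ∈ S, x i = (z S).untop₀ := fun x hx =>
    sum_inter_eq_untop₀_of_sum_eq hzI hsub hx hA hBtop (htight x hx) (hfam.sum_eq_untop₀ hzI hx hB)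
  have hT_sum : ∀ x ∈ EGP z, ∑ i ∈ T, x i = (z B).untop₀ - (z S).untop₀ := by
    intro x hx
    rw [← hfam.sum_eq_untop₀ hzI hx hB, ← hS_tight x hx, ← sum_sdiff hSB]
    ring
  -- `x_T` is constant on `EGP z`, which forces `z T < ∞` and then `z_B = z_S · z_T`
  have hTtop : z T ≠ ⊤ := hsub.ne_top_of_isDownset_preZ hz0 hzI
    (isDownset_preZ_of_sum_eq hzI (hsub.nonempty_EGP hz0 hzI) fun x hx y hy => by
      rw [hT_sum x hx, hT_sum y hy])
  have hT : (z T).untop₀ = (z B).untop₀ - (z S).untop₀ := by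
    obtain ⟨x, hx, hxT⟩ := hsub.exists_mem_EGP_sum_eq hz0 hzI hTtop
    rw [← hxT, hT_sum x hx]
  refine hfam.2.2.2.2 B hB S T hAB.1 ?_
    (hsub.splitsAlong hz0 disjoint_sdiff (union_sdiff_of_subset hSB) hStop hTtop (by linarith))
  obtain ⟨b, hbB, hbS⟩ := exists_of_ssubset (ssubset_of_subset_of_ne hSB hAB.2)
  exact ⟨b, mem_sdiff.2 ⟨hbB, hbS⟩⟩

theorem IsIndecompFactorization.exists_mem_EGP_lt_of_not_saturated
    (hfam : IsIndecompFactorization z fam) (hz0 : z ∅ = 0) (hzI : z univ ≠ ⊤)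
    (hsub : Submodular z) :
    ∃ x ∈ EGP z, ∀ A, z A ≠ ⊤ → ¬ Saturated fam A → ∑ i ∈ A, x i < (z A).untop₀ := by
  obtain ⟨x, hx, hlt⟩ := exists_mem_EGP_forall_lt hzI (hsub.nonempty_EGP hz0 hzI)
    (univ.filter fun A => z A ≠ ⊤ ∧ ¬ Saturated fam A) fun A hA => by
      simp only [mem_filter, mem_univ, true_and] at hA
      refine ⟨hA.1, ?_⟩
      by_contra! hle
      exact hA.2 (hfam.saturated_of_forall_sum_eq hz0 hzI hsub hA.1 fun x hx =>
        le_antisymm (((mem_EGP_iff hzI).1 hx).2 A hA.1) (hle x hx))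
  exact ⟨x, hx, fun A hA hsat => hlt A (by simp [hA, hsat])⟩

theorem IsIndecompFactorization.sum_eq_zero_of_saturated (hfam : IsIndecompFactorization z fam)
    {v : I → ℝ} (hv : ∀ B ∈ fam, ∑ i ∈ B, v i = 0) {A : Finset I} (hA : Saturated fam A) :
    ∑ i ∈ A, v i = 0 := by
  rw [hfam.sum_eq_sum_sum_inter]
  refine sum_eq_zero fun B hB => ?_
  rcases hA B hB with h | h <;> simp [h, hv B hB]

theorem IsIndecompFactorization.card_le_one (hfam : IsIndecompFactorization z fam)
    (hz0 : z ∅ = 0) (hind : IndecompOn z univ) : fam.card ≤ 1 := by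
  by_contra! h
  obtain ⟨B, hB, B', hB', hne⟩ := one_lt_card.1 h
  obtain ⟨b', hb'⟩ := hfam.1 B' hB'
  refine hind B Bᶜ (hfam.1 B hB)
    ⟨b', mem_compl.2 (disjoint_left.1 (hfam.2.1 B' hB' B hB hne.symm) hb')⟩
    ⟨disjoint_compl_right, union_compl B, fun E _ => ?_⟩
  -- both sides are the product of `z` over the blocks of `fam`
  have hE_inter : ∀ B'' ∈ fam.erase B, E ∩ Bᶜ ∩ B'' = E ∩ B'' := by
    intro B'' hB''
    have hd := hfam.2.1 B'' (mem_of_mem_erase hB'') B hB (ne_of_mem_erase hB'')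
    ext i
    simp only [mem_inter, mem_compl]
    exact ⟨fun h => ⟨h.1.1, h.2⟩, fun h => ⟨⟨h.1, disjoint_left.1 hd h.2⟩, h.2⟩⟩
  have hE_B : E ∩ Bᶜ ∩ B = ∅ := by
    rw [inter_assoc, inter_comm Bᶜ, inter_compl, inter_empty]
  rw [hfam.2.2.2.1 E, hfam.2.2.2.1 (E ∩ Bᶜ), ← add_sum_erase fam _ hB,
    ← add_sum_erase fam _ hB, hE_B, hz0, zero_add,
    sum_congr rfl fun B'' hB'' => congrArg z (hE_inter B'' hB'')]

theorem IsIndecompFactorization.eq_univ_of_saturated (hfam : IsIndecompFactorization z fam)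
    (hcard : fam.card ≤ 1) {A : Finset I} (hA : Saturated fam A) (hne : A.Nonempty) :
    A = univ := by
  obtain ⟨a, ha⟩ := hne
  obtain ⟨B, hB, haB⟩ := hfam.exists_mem a
  have hBA : B ⊆ A := inter_eq_right.1 <|
    (hA B hB).resolve_left (nonempty_iff_ne_empty.1 ⟨a, mem_inter.2 ⟨ha, haB⟩⟩)
  refine eq_univ_of_forall fun i => hBA ?_
  obtain ⟨B', hB', hiB'⟩ := hfam.exists_mem i
  rwa [Finset.card_le_one.1 hcard B hB B' hB']

theorem IsIndecompFactorization.direction_affineSpan_EGP (hfam : IsIndecompFactorization z fam)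
    (hz0 : z ∅ = 0) (hzI : z univ ≠ ⊤) (hsub : Submodular z) :
    (affineSpan ℝ (EGP z)).direction = LinearMap.ker (blockSum fam) := by
  apply le_antisymm
  · rw [direction_affineSpan, vectorSpan_def, Submodule.span_le]
    rintro _ ⟨x, hx, y, hy, rfl⟩
    ext B
    simp [sum_sub_distrib, hfam.sum_eq_untop₀ hzI hx B.2, hfam.sum_eq_untop₀ hzI hy B.2]
  · intro v hv
    have hv_blocks : ∀ B ∈ fam, ∑ i ∈ B, v i = 0 := fun B hB => by
      simpa using congrFun (LinearMap.mem_ker.1 hv) ⟨B, hB⟩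
    -- perturb a point that is tight only on saturated sets
    obtain ⟨x, hx, hlt⟩ := hfam.exists_mem_EGP_lt_of_not_saturated hz0 hzI hsub
    have hpert := eventually_add_smul_mem_EGP hzI hx fun A hA hxA =>
      hfam.sum_eq_zero_of_saturated hv_blocks (not_not.1 fun hsat => (hlt A hA hsat).ne hxA)
    obtain ⟨t, hxt, ht⟩ := (eventually_nhdsWithin_of_eventually_nhds (s := {0}ᶜ) hpert).and
      self_mem_nhdsWithin |>.exists
    have htv : t • v ∈ (affineSpan ℝ (EGP z)).direction := by
      simpa using AffineSubspace.vsub_mem_direction (mem_affineSpan ℝ hxt) (mem_affineSpan ℝ hx)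
    exact (Submodule.smul_mem_iff _ ht).1 htv

end Factorization

/-- If `z = z₁ ⋯ z_r` is the factorization of the submodular function `z`
into indecomposables, then `dim Π(z) = |I| − r`. In particular, if `z` is indecomposable
then `dim Π(z) = |I| − 1` and there is `x ∈ Π(z)` with `x_A < z(A)` for every `A` with
`∅ ≠ A ≠ I` and `z(A) < ∞`. -/
theorem EGP_dimension
    {I : Type*} [Fintype I] [DecidableEq I]
    (z : Finset I → WithTop ℝ) (hz0 : z ∅ = 0) (hzI : z Finset.univ ≠ ⊤)
    (hsub : Submodular z)
    (fam : Finset (Finset I)) (hfam : IsIndecompFactorization z fam) :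
    Module.finrank ℝ (affineSpan ℝ (EGP z)).direction = Fintype.card I - fam.card ∧
    (IndecompOn z Finset.univ →
      Module.finrank ℝ (affineSpan ℝ (EGP z)).direction = Fintype.card I - 1 ∧
      ∃ x ∈ EGP z, ∀ A : Finset I, A.Nonempty → A ≠ Finset.univ → z A ≠ ⊤ →
        ((∑ i ∈ A, x i : ℝ) : WithTop ℝ) < z A) := by
  have hdim : Module.finrank ℝ (affineSpan ℝ (EGP z)).direction = Fintype.card I - fam.card := by
    rw [hfam.direction_affineSpan_EGP hz0 hzI hsub, finrank_ker_blockSum hfam.1 hfam.2.1]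
  refine ⟨hdim, fun hind => ?_⟩
  have hcard := hfam.card_le_one hz0 hind
  refine ⟨?_, ?_⟩
  · rw [hdim]
    rcases Nat.le_one_iff_eq_zero_or_eq_one.1 hcard with h | h
    · have : IsEmpty I := ⟨fun i => by simpa [Finset.card_eq_zero.1 h] using hfam.exists_mem i⟩
      simp
    · rw [h]
  · obtain ⟨x, hx, hlt⟩ := hfam.exists_mem_EGP_lt_of_not_saturated hz0 hzI hsub
    refine ⟨x, hx, fun A hne hA hAtop => ?_⟩
    rw [← WithTop.coe_untop₀_of_ne_top hAtop, WithTop.coe_lt_coe]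
    exact hlt A hAtop fun hsat => hA (hfam.eq_univ_of_saturated hcard hsat hne)
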